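/- For the elephant activation function with a>0, d≥1, and any ε with 0<ε<1, if |x| ≥ d/(2ε) then |Elephant'(x)| ≤ ε, where |Elephant'(x)| = (d/a)·|x/a|^(d−1)·(1/(1+|x/a|^d))^2. -/

import Mathlib

/-
With `t = |x| / a` and `u = t ^ d`, the quantity equals `(d / |x|) · u / (1 + u) ^ 2`.
By AM-GM `u / (1 + u) ^ 2 ≤ 1 / 4`, and the hypothesis on `|x|` gives `d / |x| ≤ 2ε`,
so the derivative is in fact at most `ε / 2`.
-/

theorem div_one_add_sq_le_quarter (u : ℝ) : u / (1 + u) ^ 2 ≤ 1 / 4 :=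
  div_le_of_le_mul₀ (sq_nonneg _) (by norm_num) (by linarith [four_mul_le_sq_add 1 u])

theorem div_mul_div_rpow_sub_one {a y : ℝ} (ha : a ≠ 0) (hy : y ≠ 0) (d : ℝ) :
    d / a * (y / a) ^ (d - 1) = d / y * (y / a) ^ d := by
  rw [Real.rpow_sub_one (div_ne_zero hy ha)]
  field_simp

theorem elephant_deriv_abs_le_general (a d ε x : ℝ) (ha : 0 < a) (hd : 1 ≤ d)
    (hε : 0 < ε) (hx : d / (2 * ε) ≤ |x|) :
    (d / a) * |x / a| ^ (d - 1) * (1 / (1 + |x / a| ^ d)) ^ 2 ≤ ε := by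
  have hx₀ : 0 < |x| := lt_of_lt_of_le (by positivity) hx
  have hdx : d / |x| ≤ 2 * ε := (div_le_comm₀ (by positivity) hx₀).mp hx
  rw [abs_div, abs_of_pos ha, div_mul_div_rpow_sub_one ha.ne' hx₀.ne']
  set u := (|x| / a) ^ d
  calc
    d / |x| * u * (1 / (1 + u)) ^ 2 = d / |x| * (u / (1 + u) ^ 2) := by
      rw [div_pow, one_pow]; ring
    _ ≤ 2 * ε * (1 / 4) :=
      mul_le_mul hdx (div_one_add_sq_le_quarter u) (by positivity) (by positivity)
    _ ≤ ε := by linarith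

theorem elephant_deriv_abs_le (a d ε x : ℝ) (ha : 0 < a) (hd : 1 ≤ d)
    (hε : 0 < ε) (hε1 : ε < 1) (hx : d / (2 * ε) ≤ |x|) :
    (d / a) * |x / a| ^ (d - 1) * (1 / (1 + |x / a| ^ d)) ^ 2 ≤ ε :=
  elephant_deriv_abs_le_general a d ε x ha hd hε hx
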